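/- For γ > 1, β > 0, λ > 0: (γ−1) ∫₀^λ τ(λ−τ)^{γ−2} ∫₀¹ x arctan(x√τ/β) dx dτ = λ^γ ∫₀¹ x(1−x²)^{γ−1} arctan(x√λ/β) dx. -/

import Mathlib

/-!
Write `h σ = arctan (√σ / β) / 2`. The substitution `σ = τ x²` turns `τ ∫₀¹ x arctan (x √τ / β) dx`
into the primitive `∫₀^τ h`, so the left side is `(γ - 1) ∫₀^λ (λ - τ)^(γ-2) ∫₀^τ h dτ`.
Integrating by parts against `-(λ - τ)^(γ-1)` gives `∫₀^λ (λ - τ)^(γ-1) h(τ) dτ`, and the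
substitution `τ = λ x²` turns this into the right side.
-/

open Real intervalIntegral Set

theorem integral_zero_eq_mul_integral_unit_comp_mul_sq {g : ℝ → ℝ} (hg : Continuous g) (c : ℝ) :
    ∫ σ in (0:ℝ)..c, g σ = c * ∫ x in (0:ℝ)..1, 2 * x * g (c * x ^ 2) := by
  have hsubst := integral_comp_mul_deriv (a := 0) (b := 1) (f := fun x => c * x ^ 2)
    (f' := fun x => 2 * c * x) (g := g)
    (fun x _ => ((hasDerivAt_pow 2 x).const_mul c).congr_deriv (by ring)) (by fun_prop) hg
  norm_num [Function.comp_def] at hsubst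
  rw [← hsubst, ← integral_const_mul]
  congr 1 with x
  ring

/-- Riemann–Liouville: `I^(γ-1)` applied to the primitive of `f` is `I^γ f`. -/
theorem mul_integral_sub_rpow_mul_primitive {f : ℝ → ℝ} (hf : Continuous f) {γ : ℝ} (hγ : 1 < γ)
    (lam : ℝ) :
    (γ - 1) * ∫ τ in (0:ℝ)..lam, (lam - τ) ^ (γ - 2) * ∫ σ in (0:ℝ)..τ, f σ
      = ∫ τ in (0:ℝ)..lam, (lam - τ) ^ (γ - 1) * f τ := by
  have hprimitive (τ : ℝ) : HasDerivAt (fun t => ∫ σ in (0:ℝ)..t, f σ) (f τ) τ :=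
    integral_hasDerivAt_right (hf.intervalIntegrable _ _) (hf.stronglyMeasurableAtFilter _ _)
      hf.continuousAt
  have hweight : ∀ τ ∈ Ioo (min 0 lam) (max 0 lam),
      HasDerivAt (fun t => (lam - t) ^ (γ - 1)) (-((γ - 1) * (lam - τ) ^ (γ - 2))) τ := by
    intro τ hτ
    have hne : lam - τ ≠ 0 := by
      rintro hτlam
      rw [sub_eq_zero.1 hτlam] at hτ
      simp only [mem_Ioo, min_lt_iff, lt_max_iff, lt_self_iff_false] at hτ
      grind
    convert ((hasDerivAt_id' τ).const_sub lam).rpow_const (p := γ - 1) (Or.inl hne) using 1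
    rw [show γ - 1 - 1 = γ - 2 by ring]
    ring
  have hweight_integrable :
      IntervalIntegrable (fun τ => (lam - τ) ^ (γ - 2)) MeasureTheory.volume 0 lam := by
    simpa using ((intervalIntegrable_rpow' (r := γ - 2) (by linarith)).comp_sub_left lam
      (a := 0) (b := lam)).symm
  rw [integral_mul_deriv_eq_deriv_mul_of_hasDerivAt (u := fun t => (lam - t) ^ (γ - 1))
    ((continuous_const.sub continuous_id).rpow_const fun _ => Or.inr (by linarith)).continuousOn
    (fun τ _ => (hprimitive τ).continuousAt.continuousWithinAt) hweight
    (fun τ _ => hprimitive τ) (hweight_integrable.const_mul _).neg (hf.intervalIntegrable _ _)]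
  simp [zero_rpow (by linarith : γ - 1 ≠ 0), integral_neg, integral_const_mul, mul_assoc]

theorem integral_arctan_sqrt_div_two (β : ℝ) {τ : ℝ} (hτ : 0 ≤ τ) :
    ∫ σ in (0:ℝ)..τ, arctan (√σ / β) / 2 = τ * ∫ x in (0:ℝ)..1, x * arctan (x * √τ / β) := by
  rw [integral_zero_eq_mul_integral_unit_comp_mul_sq (by fun_prop)]
  congr 1
  refine integral_congr fun x hx => ?_
  rw [uIcc_of_le zero_le_one] at hx
  rw [sqrt_mul hτ, sqrt_sq hx.1, mul_comm √τ x]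
  ring

theorem integral_sub_rpow_mul_arctan_sqrt_div_two {γ lam : ℝ} (hγ : 1 < γ) (hlam : 0 < lam)
    (β : ℝ) :
    ∫ τ in (0:ℝ)..lam, (lam - τ) ^ (γ - 1) * (arctan (√τ / β) / 2)
      = lam ^ γ * ∫ x in (0:ℝ)..1, x * (1 - x ^ 2) ^ (γ - 1) * arctan (x * √lam / β) := by
  rw [integral_zero_eq_mul_integral_unit_comp_mul_sq (by fun_prop (disch := linarith)),
    ← integral_const_mul, ← integral_const_mul]
  refine integral_congr fun x hx => ?_
  rw [uIcc_of_le zero_le_one] at hx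
  have hx2 : 0 ≤ 1 - x ^ 2 := by nlinarith [hx.1, hx.2]
  rw [sqrt_mul hlam.le, sqrt_sq hx.1, mul_comm √lam x,
    show lam - lam * x ^ 2 = lam * (1 - x ^ 2) by ring, mul_rpow hlam.le hx2, rpow_sub_one hlam.ne']
  field_simp

theorem double_integral_lifting_identity
    (γ lam β : ℝ) (hγ : 1 < γ) (hlam : 0 < lam) :
    (γ - 1) * ∫ τ in (0:ℝ)..lam,
        τ * (lam - τ) ^ (γ - 2)
          * ∫ x in (0:ℝ)..1, x * Real.arctan (x * Real.sqrt τ / β)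
      = lam ^ γ * ∫ x in (0:ℝ)..1,
          x * (1 - x ^ 2) ^ (γ - 1) * Real.arctan (x * Real.sqrt lam / β) := by
  calc _ = (γ - 1) * ∫ τ in (0:ℝ)..lam,
          (lam - τ) ^ (γ - 2) * ∫ σ in (0:ℝ)..τ, arctan (√σ / β) / 2 := by
        congr 1
        refine integral_congr fun τ hτ => ?_
        rw [uIcc_of_le hlam.le] at hτ
        rw [integral_arctan_sqrt_div_two β hτ.1]
        ring
    _ = ∫ τ in (0:ℝ)..lam, (lam - τ) ^ (γ - 1) * (arctan (√τ / β) / 2) :=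
        mul_integral_sub_rpow_mul_primitive (by fun_prop) hγ lam
    _ = _ := integral_sub_rpow_mul_arctan_sqrt_div_two hγ hlam β
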